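/- arXiv:2601.08667 — 6 statements merged into one kernel-verified Lean document; each statement's English description precedes it below -/
import Mathlib

section
/- Let ℓ ∈ [0,1], ρ > 0 and c ∈ ℝ^d satisfy ‖c‖ ≥ 1, B(c,ρ) ∩ B(0, 1−ℓ) = ∅ and −e_d ∉ B(c,ρ). Set α_ℓ := √(2−ℓ) − 1 and x_ℓ := −(1 − ℓ + (α_ℓ/2)ℓ)e_d. Then B(x_ℓ, (α_ℓ/2)ℓ) ⊆ (B(−e_d, ℓ) ∩ B(0,1)) \ B(c, ρ). -/
open Metric

noncomputable def ed (d : ℕ) : EuclideanSpace ℝ (Fin (d + 1)) :=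
  EuclideanSpace.single (Fin.last d) (1 : ℝ)

set_option maxHeartbeats 1000000 in
lemma scalar_key (s ρ A B : ℝ) (hs1 : 1 < s) (hs2 : s^2 < 2) (hρ : 0 < ρ)
    (hA1 : 1 ≤ A) (hA2 : (ρ + (s^2-1))^2 ≤ A) (hB : ρ^2 ≤ B) :
    (ρ + (s-1)*(2-s^2)/2)^2 ≤
      (1-((s^2-1) + (s-1)*(2-s^2)/2))*A + ((s^2-1) + (s-1)*(2-s^2)/2)*B
        - ((s^2-1) + (s-1)*(2-s^2)/2)*(1-((s^2-1) + (s-1)*(2-s^2)/2)) := by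
  have hs0 : (0:ℝ) < s := by linarith
  have h2s : s < 2 := by nlinarith
  have ht1 : (0:ℝ) < 1 - ((s^2-1) + (s-1)*(2-s^2)/2) := by nlinarith
  have ht0 : (0:ℝ) < (s^2-1) + (s-1)*(2-s^2)/2 := by nlinarith
  have key1 : (0:ℝ) ≤ 1/2*(s*((s-1)*((2-s^2)^2*(2-s)))) := by
    have h1 : (0:ℝ) ≤ (2-s^2)^2*(2-s) := mul_nonneg (sq_nonneg _) (by linarith)
    have h2 : (0:ℝ) ≤ (s-1)*((2-s^2)^2*(2-s)) := mul_nonneg (by linarith) h1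
    have h3 : (0:ℝ) ≤ s*((s-1)*((2-s^2)^2*(2-s))) := mul_nonneg hs0.le h2
    linarith
  have hB' := mul_le_mul_of_nonneg_left hB ht0.le
  rcases le_or_gt ρ (2 - s^2) with hcase | hcase
  · have hA' := mul_le_mul_of_nonneg_left hA1 ht1.le
    have key2 : (0:ℝ) ≤ (2-s^2-ρ)*((1-((s^2-1) + (s-1)*(2-s^2)/2))*((2-s^2)+ρ)
        + 2*((s-1)*(2-s^2)/2)) := by
      have h1 : (0:ℝ) ≤ (1-((s^2-1) + (s-1)*(2-s^2)/2))*((2-s^2)+ρ) :=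
        mul_nonneg ht1.le (by nlinarith)
      have h2 : (0:ℝ) ≤ (s-1)*(2-s^2)/2 := by nlinarith
      exact mul_nonneg (by linarith) (by linarith)
    linarith [hA', hB', key1, key2]
  · have hA' := mul_le_mul_of_nonneg_left hA2 ht1.le
    have key2 : (0:ℝ) ≤ (ρ-(2-s^2))*((s-1)*((2-s^2)*(2+2*s-s^2))) := by
      have h1 : (0:ℝ) ≤ (2-s^2)*(2+2*s-s^2) := mul_nonneg (by linarith) (by nlinarith)
      exact mul_nonneg (by linarith) (mul_nonneg (by linarith) h1)
    linarith [hA', hB', key1, key2]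

set_option maxHeartbeats 2000000 in
/-- Under the lens-avoidance hypotheses, with `α_ℓ = √(2-ℓ) - 1` and
`x_ℓ = -(1 - ℓ + (α_ℓ/2)ℓ)e_d`, the ball `B(x_ℓ, (α_ℓ/2)ℓ)` is contained in the lens
`B(-e_d, ℓ) ∩ B(0,1)` and avoids `B(c, ρ)`. -/
theorem ball_in_lens_avoiding {d : ℕ} (ℓ ρ : ℝ) (hℓ0 : 0 ≤ ℓ) (hℓ1 : ℓ ≤ 1) (hρ : 0 < ρ)
    (c : EuclideanSpace ℝ (Fin (d + 1))) (hc : 1 ≤ ‖c‖)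
    (hdisj : ball c ρ ∩ ball 0 (1 - ℓ) = ∅)
    (hed : -ed d ∉ ball c ρ) :
    ball (-((1 - ℓ + ((Real.sqrt (2 - ℓ) - 1) / 2) * ℓ) • ed d))
        (((Real.sqrt (2 - ℓ) - 1) / 2) * ℓ)
      ⊆ (ball (-ed d) ℓ ∩ ball 0 1) \ ball c ρ := by
  have h2ℓ : (0:ℝ) ≤ 2 - ℓ := by linarith
  set s := Real.sqrt (2 - ℓ) with hs_def
  have hs_sq : s^2 = 2 - ℓ := Real.sq_sqrt h2ℓ
  have hs_nonneg : 0 ≤ s := Real.sqrt_nonneg _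
  have hs1 : 1 ≤ s := by nlinarith
  have hs2 : s < 2 := by nlinarith
  rcases le_or_gt ((s - 1) / 2 * ℓ) 0 with hr | hr
  · rw [ball_eq_empty.mpr hr]; exact Set.empty_subset _
  have hℓpos : 0 < ℓ := by
    by_contra h
    push_neg at h
    have h2 : (s-1)/2*ℓ ≤ 0 :=
      mul_nonpos_of_nonneg_of_nonpos (by linarith : (0:ℝ) ≤ (s-1)/2) (by linarith)
    linarith
  have hsgt : 1 < s := by
    by_contra h
    push_neg at h
    have h2 : (s-1)/2*ℓ ≤ 0 :=
      mul_nonpos_of_nonpos_of_nonneg (by linarith : (s-1)/2 ≤ (0:ℝ)) hℓ0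
    linarith
  have hℓlt1 : ℓ < 1 := by nlinarith
  set r : ℝ := (s - 1) / 2 * ℓ with hr_def
  set t : ℝ := 1 - ℓ + r with ht_def
  have hrℓ : 2 * r ≤ ℓ := by nlinarith
  have ht_nonneg : 0 ≤ t := by simp only [ht_def]; linarith
  have hed_norm : ‖ed d‖ = 1 := by
    rw [ed, EuclideanSpace.norm_single]; norm_num
  intro y hy
  rw [mem_ball] at hy
  have hd1 : dist (-(t • ed d)) (-ed d) = ℓ - r := by
    rw [dist_eq_norm]
    have he : -(t • ed d) - -ed d = (1 - t) • ed d := by module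
    rw [he, norm_smul, hed_norm, mul_one, Real.norm_eq_abs,
      abs_of_nonneg (by simp only [ht_def]; linarith)]
    simp only [ht_def]; ring
  have hd2 : dist (-(t • ed d)) 0 = t := by
    rw [dist_zero_right, norm_neg, norm_smul, hed_norm, mul_one, Real.norm_eq_abs,
      abs_of_nonneg ht_nonneg]
  refine ⟨⟨?_, ?_⟩, ?_⟩
  · rw [mem_ball]
    calc dist y (-ed d) ≤ dist y (-(t • ed d)) + dist (-(t • ed d)) (-ed d) := dist_triangle _ _ _
      _ < r + (ℓ - r) := by rw [hd1]; linarith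
      _ = ℓ := by ring
  · rw [mem_ball]
    calc dist y 0 ≤ dist y (-(t • ed d)) + dist (-(t • ed d)) 0 := dist_triangle _ _ _
      _ < r + t := by rw [hd2]; linarith
      _ ≤ 1 := by simp only [ht_def]; linarith
  · -- avoid ball c ρ
    have hB : ρ ≤ ‖c + ed d‖ := by
      rw [mem_ball, not_lt, dist_eq_norm] at hed
      have : -ed d - c = -(c + ed d) := by module
      rwa [this, norm_neg] at hed
    have hA2 : ρ + (1 - ℓ) ≤ ‖c‖ := by
      have hdj : Disjoint (ball c ρ) (ball (0 : EuclideanSpace ℝ (Fin (d+1))) (1 - ℓ)) :=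
        Set.disjoint_iff_inter_eq_empty.mpr hdisj
      have := (disjoint_ball_ball_iff hρ (by linarith : (0:ℝ) < 1 - ℓ)).mp hdj
      rwa [dist_zero_right] at this
    have hip : ‖c + t • ed d‖^2 = (1-t)*‖c‖^2 + t*‖c + ed d‖^2 - t*(1-t) := by
      have e1 := norm_add_sq_real c (t • ed d)
      have e2 := norm_add_sq_real c (ed d)
      rw [real_inner_smul_right, norm_smul, hed_norm, mul_one, Real.norm_eq_abs] at e1
      rw [hed_norm] at e2
      rw [sq_abs] at e1
      linear_combination e1 - t * e2
    have hA1 : 1 ≤ ‖c‖^2 := by nlinarith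
    have hA2' : (ρ + (s^2 - 1))^2 ≤ ‖c‖^2 := by
      rw [hs_sq]
      have h0 : 0 ≤ ρ + (2 - ℓ - 1) := by linarith
      nlinarith
    have hB' : ρ^2 ≤ ‖c + ed d‖^2 := by nlinarith [norm_nonneg (c + ed d)]
    have key := scalar_key s ρ (‖c‖^2) (‖c + ed d‖^2) hsgt (by rw [hs_sq]; linarith) hρ
      hA1 hA2' hB'
    have hteq : (s^2-1) + (s-1)*(2-s^2)/2 = t := by
      simp only [ht_def, hr_def, hs_sq]; ring
    have hreq : (s-1)*(2-s^2)/2 = r := by simp only [hr_def, hs_sq]; ring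
    rw [hteq, hreq] at key
    have hsq : (ρ + r)^2 ≤ ‖c + t • ed d‖^2 := by rw [hip]; linarith
    have hdist : ρ + r ≤ dist (-(t • ed d)) c := by
      rw [dist_eq_norm]
      have he : -(t • ed d) - c = -(c + t • ed d) := by module
      rw [he, norm_neg]
      nlinarith [norm_nonneg (c + t • ed d)]
    intro hmem
    rw [mem_ball] at hmem
    have htri := dist_triangle (-(t • ed d)) y c
    rw [dist_comm y (-(t • ed d))] at hy
    linarith
end

section
/- Let ℓ ∈ (0,1] and δ ≥ 0, let ρ ≥ 0 satisfy ρ ≤ ℓ + δ, and let R ≥ 0 satisfy R² ≥ ρ² + ℓ(1−ℓ)(ℓ+2δ). Then R − ρ ≥ (√(2−ℓ) − 1)ℓ. -/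
/-- Scalar inequality: for `ℓ ∈ (0,1]`, `δ ≥ 0`, `ρ ∈ [0, ℓ+δ]`, `R ≥ 0` with
`R² ≥ ρ² + ℓ(1-ℓ)(ℓ+2δ)`, one has `R - ρ ≥ ℓ(√(2-ℓ) - 1)`. -/
theorem scalar_sqrt_ineq (ℓ δ ρ R : ℝ) (hℓ0 : 0 < ℓ) (hℓ1 : ℓ ≤ 1) (hδ : 0 ≤ δ)
    (hρ0 : 0 ≤ ρ) (hρ : ρ ≤ ℓ + δ) (hR0 : 0 ≤ R)
    (hR : ρ ^ 2 + ℓ * (1 - ℓ) * (ℓ + 2 * δ) ≤ R ^ 2) :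
    ℓ * (Real.sqrt (2 - ℓ) - 1) ≤ R - ρ := by
  set t := Real.sqrt (2 - ℓ) with ht
  have ht2 : t ^ 2 = 2 - ℓ := Real.sq_sqrt (by linarith)
  have ht1 : 1 ≤ t := by nlinarith [Real.sqrt_nonneg (2 - ℓ)]
  have hx0 : 0 ≤ ρ + ℓ * (t - 1) := by nlinarith
  have key : (ρ + ℓ * (t - 1)) ^ 2 ≤ ρ ^ 2 + ℓ * (1 - ℓ) * (ℓ + 2 * δ) := by
    have h1 : 0 ≤ ℓ * ((t - 1) * (ℓ + δ - ρ)) :=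
      mul_nonneg hℓ0.le (mul_nonneg (by linarith) (by linarith))
    have h2 : 0 ≤ ℓ * (δ * (t * (t - 1))) :=
      mul_nonneg hℓ0.le (mul_nonneg hδ (mul_nonneg (by linarith) (by linarith)))
    have e1 : ℓ ^ 2 * t ^ 2 = ℓ ^ 2 * (2 - ℓ) := by rw [ht2]
    have e2 : ℓ * δ * t ^ 2 = ℓ * δ * (2 - ℓ) := by rw [ht2]
    nlinarith [h1, h2, e1, e2]
  have hx : ρ + ℓ * (t - 1) ≤ R := by nlinarith [key, hR]
  linarith
end

section
/- Let c ∈ ℝ^d, ρ ≥ 0 and ℓ ∈ [0, 1/2] be such that ‖c‖ ≥ 1, B(c,ρ) ∩ B(0, 1−ℓ) = ∅, and the closed balls B̄(c,ρ) and B̄(−e_d, ℓ) intersect. Then 1 + c·e_d ≤ 2ℓ². -/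
open Metric

/-- Flatness-default lemma: if `‖c‖ ≥ 1`, `B(c,ρ)` avoids `B(0,1-ℓ)` and the closed balls
`B̄(c,ρ)` and `B̄(-e_d,ℓ)` intersect, with `ℓ ∈ [0,1/2]`, then `1 + c·e_d ≤ 2ℓ²`. -/
theorem flatness_default {d : ℕ} (ℓ ρ : ℝ) (hℓ0 : 0 ≤ ℓ) (hℓ1 : ℓ ≤ 1 / 2) (hρ : 0 ≤ ρ)
    (c : EuclideanSpace ℝ (Fin (d + 1))) (hc : 1 ≤ ‖c‖)
    (hdisj : ball c ρ ∩ ball 0 (1 - ℓ) = ∅)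
    (hmeet : (closedBall c ρ ∩ closedBall (-ed d) ℓ).Nonempty) :
    1 + (inner ℝ c (ed d) : ℝ) ≤ 2 * ℓ ^ 2 := by
  obtain ⟨x, hx1, hx2⟩ := hmeet
  have hed : ‖ed d‖ = 1 := by
    simp [ed, EuclideanSpace.norm_single]
  -- distance bound from intersection
  have hdist : ‖c + ed d‖ ≤ ρ + ℓ := by
    have h1 : dist c x ≤ ρ := by rwa [dist_comm, ← mem_closedBall]
    have h2 : dist x (-ed d) ≤ ℓ := hx2
    have := dist_triangle c x (-ed d)
    have hce : dist c (-ed d) = ‖c + ed d‖ := by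
      rw [dist_eq_norm, sub_neg_eq_add]
    linarith [hce ▸ this]
  -- distance bound from disjointness
  have hkey : ‖c + ed d‖ ≤ ‖c‖ - 1 + 2 * ℓ := by
    rcases eq_or_lt_of_le hρ with hρ0 | hρ0
    · calc ‖c + ed d‖ ≤ ρ + ℓ := hdist
        _ = ℓ := by rw [← hρ0]; ring
        _ ≤ ‖c‖ - 1 + 2 * ℓ := by linarith
    · have hdisj' : Disjoint (ball c ρ) (ball 0 (1 - ℓ)) :=
        Set.disjoint_iff_inter_eq_empty.mpr hdisj
      have := (disjoint_ball_ball_iff hρ0 (by linarith)).mp hdisj'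
      rw [dist_zero_right] at this
      linarith
  have hsq : ‖c + ed d‖ ^ 2 = ‖c‖ ^ 2 + 2 * (inner ℝ c (ed d) : ℝ) + ‖ed d‖ ^ 2 :=
    norm_add_sq_real c (ed d)
  have hnn : (0:ℝ) ≤ ‖c + ed d‖ := norm_nonneg _
  have hrhs : (0:ℝ) ≤ ‖c‖ - 1 + 2 * ℓ := by linarith
  have h2 : ‖c + ed d‖ ^ 2 ≤ (‖c‖ - 1 + 2 * ℓ) ^ 2 := by
    apply pow_le_pow_left₀ hnn hkey
  rw [hed] at hsq
  nlinarith [hc, hℓ1]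
end

section
/- Let N be a homogeneous Poisson point process of unit intensity on ℝ^d, and for x ∈ ℝ^d \ {0} let Ψ(x) be the point of N ∪ {0} nearest to x among those y with ‖y‖ < ‖x‖ (assumed a.s. well-defined). Then for all x ∈ ℝ^d and t ≥ 0, P(‖Ψ(x) − x‖ > t) ≤ exp(−(t/2)^d · vol(B(0,1))). -/
open Metric MeasureTheory ProbabilityTheory

/-- `N` is a homogeneous Poisson point process of unit intensity on `ℝ^d`:
counts of points in disjoint finite-volume measurable sets are independent, and the number
of points in a finite-volume measurable set `A` is Poisson distributed with mean `vol(A)`. -/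
def IsHomPoissonPP {Ω : Type*} [MeasureSpace Ω] {d : ℕ}
    (N : Ω → Set (EuclideanSpace ℝ (Fin d))) : Prop :=
  (∀ (n : ℕ) (A : Fin n → Set (EuclideanSpace ℝ (Fin d))),
      (∀ i, MeasurableSet (A i)) → (∀ i, volume (A i) < ⊤) →
      Pairwise (Function.onFun Disjoint A) →
      iIndepFun (fun i ω => (N ω ∩ A i).ncard) ℙ) ∧
  (∀ A : Set (EuclideanSpace ℝ (Fin d)), MeasurableSet A → volume A < ⊤ → ∀ k : ℕ,
      ℙ {ω | (N ω ∩ A).ncard = k} =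
        ENNReal.ofReal (Real.exp (-(volume A).toReal) * (volume A).toReal ^ k /
          (Nat.factorial k)))

/-- Tail bound for the radial nearest-neighbor displacement: if `Ψ ω x` is (a.s.) the point of
`N ω ∪ {0}` nearest to `x` among those strictly closer to the origin (with `Ψ ω 0 = 0`), then
`P(‖Ψ(x) - x‖ > t) ≤ exp(-(t/2)^d vol(B(0,1)))`. -/
theorem psi_tail_bound {Ω : Type*} [MeasureSpace Ω] [IsProbabilityMeasure (ℙ : Measure Ω)]
    {d : ℕ} (hd : 2 ≤ d)
    (N : Ω → Set (EuclideanSpace ℝ (Fin d))) (hN : IsHomPoissonPP N)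
    (Ψ : Ω → EuclideanSpace ℝ (Fin d) → EuclideanSpace ℝ (Fin d))
    (hΨ0 : ∀ ω, Ψ ω 0 = 0)
    (hΨ : ∀ x, x ≠ 0 → ∀ᵐ ω ∂ℙ,
      Ψ ω x ∈ N ω ∪ {0} ∧ ‖Ψ ω x‖ < ‖x‖ ∧
        ∀ y ∈ N ω ∪ {0}, ‖y‖ < ‖x‖ → ‖Ψ ω x - x‖ ≤ ‖y - x‖)
    (x : EuclideanSpace ℝ (Fin d)) (t : ℝ) (ht : 0 ≤ t) :
    ℙ {ω | t < ‖Ψ ω x - x‖} ≤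
      ENNReal.ofReal
        (Real.exp (-(t / 2) ^ d * (volume (ball (0 : EuclideanSpace ℝ (Fin d)) 1)).toReal)) := by
  rcases eq_or_ne x 0 with rfl | hx
  · have h : {ω : Ω | t < ‖Ψ ω 0 - 0‖} = ∅ := by
      ext ω
      simp [hΨ0 ω, not_lt.2 ht]
    rw [h, measure_empty]
    exact zero_le
  by_cases hxt : ‖x‖ ≤ t
  · have h0 : ℙ {ω | t < ‖Ψ ω x - x‖} = 0 := by
      rw [measure_eq_zero_iff_ae_notMem]
      filter_upwards [hΨ x hx] with ω hω
      obtain ⟨_, _, hmin⟩ := hω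
      have h1 : ‖Ψ ω x - x‖ ≤ ‖(0 : EuclideanSpace ℝ (Fin d)) - x‖ :=
        hmin 0 (Or.inr rfl) (by simpa using norm_pos_iff.2 hx)
      simp only [Set.mem_setOf_eq, not_lt]
      calc ‖Ψ ω x - x‖ ≤ ‖(0 : EuclideanSpace ℝ (Fin d)) - x‖ := h1
        _ = ‖x‖ := by simp
        _ ≤ t := hxt
    rw [h0]; exact zero_le
  push_neg at hxt
  -- now 0 ≤ t < ‖x‖
  have hx0 : (0 : ℝ) < ‖x‖ := norm_pos_iff.2 hx
  set c : EuclideanSpace ℝ (Fin d) := (1 - t / (2 * ‖x‖)) • x with hc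
  have hcoef : 0 ≤ 1 - t / (2 * ‖x‖) := by
    have : t / (2 * ‖x‖) ≤ 1 := by
      rw [div_le_one (by positivity)]
      nlinarith
    linarith
  have hcx : ‖c - x‖ = t / 2 := by
    have : c - x = (-(t / (2 * ‖x‖))) • x := by
      rw [hc, sub_smul, one_smul, neg_smul]
      abel
    rw [this, norm_smul]
    simp only [norm_neg, Real.norm_eq_abs, abs_div]
    rw [abs_of_nonneg ht, abs_of_pos (by positivity : (0:ℝ) < 2 * ‖x‖)]
    field_simp
  have hcn : ‖c‖ = ‖x‖ - t / 2 := by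
    rw [hc, norm_smul, Real.norm_eq_abs, abs_of_nonneg hcoef]
    field_simp
  -- the key inclusion
  have hincl : {ω | t < ‖Ψ ω x - x‖} ≤ᵐ[ℙ] {ω | (N ω ∩ ball c (t / 2)).ncard = 0} := by
    filter_upwards [hΨ x hx] with ω hω hmem
    obtain ⟨_, _, hmin⟩ := hω
    have hempty : N ω ∩ ball c (t / 2) = ∅ := by
      by_contra hne
      obtain ⟨y, hyN, hyb⟩ := Set.nonempty_iff_ne_empty.2 hne
      rw [mem_ball, dist_eq_norm] at hyb
      have hyx : ‖y - x‖ < t := by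
        calc ‖y - x‖ ≤ ‖y - c‖ + ‖c - x‖ := norm_sub_le_norm_sub_add_norm_sub y c x
          _ < t / 2 + t / 2 := by rw [hcx]; linarith
          _ = t := by ring
      have hyn : ‖y‖ < ‖x‖ := by
        calc ‖y‖ ≤ ‖y - c‖ + ‖c‖ := by
              simpa using norm_add_le (y - c) c
          _ < t / 2 + (‖x‖ - t / 2) := by rw [hcn]; linarith
          _ = ‖x‖ := by ring
      have := hmin y (Or.inl hyN) hyn
      have ht' : t < ‖Ψ ω x - x‖ := hmem
      linarith
    show (N ω ∩ ball c (t / 2)).ncard = 0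
    rw [hempty]
    exact Set.ncard_empty _
  haveI : Nontrivial (EuclideanSpace ℝ (Fin d)) := ⟨⟨x, 0, hx⟩⟩
  have hvol : volume (ball c (t / 2)) < ⊤ := measure_ball_lt_top
  have hkey := hN.2 (ball c (t / 2)) measurableSet_ball hvol 0
  have hV : (volume (ball c (t / 2))).toReal =
      (t / 2) ^ d * (volume (ball (0 : EuclideanSpace ℝ (Fin d)) 1)).toReal := by
    rw [Measure.addHaar_ball volume c (by positivity : (0:ℝ) ≤ t / 2)]
    rw [ENNReal.toReal_mul, ENNReal.toReal_ofReal (by positivity)]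
    congr 2
    simp [finrank_euclideanSpace_fin]
  calc ℙ {ω | t < ‖Ψ ω x - x‖} ≤ ℙ {ω | (N ω ∩ ball c (t / 2)).ncard = 0} :=
        measure_mono_ae hincl
    _ = ENNReal.ofReal
        (Real.exp (-(t / 2) ^ d * (volume (ball (0 : EuclideanSpace ℝ (Fin d)) 1)).toReal)) := by
        rw [hkey]
        congr 1
        rw [hV]
        simp [neg_mul]
end

section
/- Let N be a homogeneous Poisson point process of unit intensity on ℝ^d with Ψ defined as the radial nearest-neighbor map. Then almost surely there are only finitely many points x ∈ N with ‖Ψ(x) − x‖ > ‖x‖^{1/2}. -/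
open Metric MeasureTheory ProbabilityTheory Filter
open scoped ENNReal

lemma coord_le_norm {d : ℕ} (x : EuclideanSpace ℝ (Fin d)) (i : Fin d) : |x i| ≤ ‖x‖ := by
  rw [EuclideanSpace.norm_eq]
  have h1 : |x i| = Real.sqrt (‖x i‖ ^ 2) := by
    rw [Real.sqrt_sq_eq_abs]; simp
  rw [h1]
  apply Real.sqrt_le_sqrt
  exact Finset.single_le_sum (f := fun j => ‖x j‖ ^ 2) (fun j _ => sq_nonneg _) (Finset.mem_univ i)

lemma net_lemma {d : ℕ} (hd : 1 ≤ d) (n : ℕ) (hn : 1 ≤ n) :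
    ∃ S : Finset (EuclideanSpace ℝ (Fin d)), S.card ≤ (500*d*n)^d ∧
      ∀ x : EuclideanSpace ℝ (Fin d), ‖x‖ < n + 1 →
        ∃ p ∈ S, ‖x - p‖ ≤ Real.sqrt n / 100 := by
  have hs1 : (1:ℝ) ≤ Real.sqrt n := by
    rw [show (1:ℝ) = Real.sqrt 1 by simp]
    exact Real.sqrt_le_sqrt (by exact_mod_cast hn)
  have hs0 : (0:ℝ) < Real.sqrt n := lt_of_lt_of_le one_pos hs1
  set δ : ℝ := Real.sqrt n / (100 * d) with hδ
  have hd0 : (0:ℝ) < d := by exact_mod_cast hd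
  have hδ0 : 0 < δ := div_pos hs0 (by positivity)
  set M : ℕ := 200*d*n+1 with hM
  classical
  refine ⟨(Fintype.piFinset fun _ : Fin d => Finset.Icc (-(M:ℤ)) (M:ℤ)).image
    (fun k => (WithLp.toLp 2 (fun i => (k i : ℝ) * δ) : EuclideanSpace ℝ (Fin d))), ?_, ?_⟩
  · calc _ ≤ (Fintype.piFinset fun _ : Fin d => Finset.Icc (-(M:ℤ)) (M:ℤ)).card :=
          Finset.card_image_le
    _ = (2*M+1)^d := by
          rw [Fintype.card_piFinset]
          simp only [Int.card_Icc]
          rw [Finset.prod_const]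
          congr 1
          · omega
          · simp
    _ ≤ (500*d*n)^d := by
          apply Nat.pow_le_pow_left
          have h1 : 2*M+1 = 400*(d*n)+3 := by rw [hM]; ring
          have h2 : 500*d*n = 500*(d*n) := by ring
          have h3 : 1 ≤ d*n := Nat.one_le_iff_ne_zero.mpr (by positivity)
          rw [h1, h2]
          set m := d*n
          omega
  · intro x hx
    set k : Fin d → ℤ := fun i => round (x i / δ) with hk
    set p : EuclideanSpace ℝ (Fin d) := WithLp.toLp 2 (fun i => (k i : ℝ) * δ) with hpdef
    have hp : ∀ i, p i = (k i : ℝ) * δ := fun _ => rfl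
    refine ⟨p, ?_, ?_⟩
    · apply Finset.mem_image_of_mem
      rw [Fintype.mem_piFinset]
      intro i
      rw [Finset.mem_Icc, ← abs_le]
      have h1 : |x i / δ| ≤ (n+1) * (100*d) / Real.sqrt n := by
        rw [abs_div, abs_of_pos hδ0, hδ, div_div_eq_mul_div]
        gcongr
        have := coord_le_norm x i
        linarith
      have h2 : |(k i : ℝ)| ≤ |x i / δ| + 1/2 := by
        have h := abs_sub_round (x i / δ)
        have h' : |(k i:ℝ)| - |x i / δ| ≤ |(k i:ℝ) - x i / δ| := abs_sub_abs_le_abs_sub _ _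
        rw [abs_sub_comm] at h'
        simp only [hk] at h' ⊢
        linarith
      have h3 : ((n:ℝ)+1) * (100*d) / Real.sqrt n ≤ ((n:ℝ)+1) * (100*d) := by
        nth_rewrite 2 [show ((n:ℝ)+1) * (100*d) = ((n:ℝ)+1) * (100*d)/1 by ring]
        apply div_le_div_of_nonneg_left (by positivity) one_pos hs1
      have h4 : |(k i : ℝ)| ≤ (M:ℝ) := by
        have hn1 : (1:ℝ) ≤ (n:ℝ) := by exact_mod_cast hn
        have : ((n:ℝ)+1) * (100*d) + 1/2 ≤ (M:ℝ) := by
          rw [hM]; push_cast; nlinarith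
        linarith
      have h6 : |k i| ≤ (M:ℤ) := by
        rw [← Int.cast_abs] at h4
        exact_mod_cast h4
      exact h6
    · have hterm : ∀ i : Fin d, ‖x i - (k i : ℝ) * δ‖ ^ 2 ≤ (δ/2)^2 := by
        intro i
        have h1 : |x i - (k i : ℝ) * δ| = δ * |x i / δ - (k i : ℝ)| := by
          have e : x i - (k i : ℝ) * δ = δ * (x i / δ - (k i : ℝ)) := by
            field_simp
          rw [e, abs_mul, abs_of_pos hδ0]
        have h2 : |x i / δ - (k i : ℝ)| ≤ 1/2 := abs_sub_round (x i / δ)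
        have h3 : |x i - (k i : ℝ) * δ| ≤ δ/2 := by
          rw [h1]; nlinarith
        calc ‖x i - (k i : ℝ) * δ‖ ^ 2 = |x i - (k i : ℝ) * δ| ^ 2 := by simp
        _ ≤ (δ/2)^2 := by nlinarith [abs_nonneg (x i - (k i : ℝ) * δ)]
      have : ‖x - p‖ ≤ Real.sqrt (d * (δ/2)^2) := by
        rw [EuclideanSpace.norm_eq]
        apply Real.sqrt_le_sqrt
        calc ∑ i, ‖(x - p) i‖^2
            = ∑ i : Fin d, ‖x i - (k i : ℝ) * δ‖^2 := by
              apply Finset.sum_congr rfl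
              intro i _
              rw [show (x - p) i = x i - p i from rfl, hp]
        _ ≤ ∑ _i : Fin d, (δ/2)^2 := Finset.sum_le_sum (fun i _ => hterm i)
        _ = d * (δ/2)^2 := by rw [Finset.sum_const]; simp [mul_comm]
      refine le_trans this ?_
      rw [Real.sqrt_mul (by positivity), Real.sqrt_sq (by positivity)]
      have hsd : Real.sqrt d ≤ d := by
        have hd1 : (1:ℝ) ≤ (d:ℝ) := by exact_mod_cast hd
        have h2 : Real.sqrt d ≤ Real.sqrt ((d:ℝ)^2) := Real.sqrt_le_sqrt (by nlinarith)
        rwa [Real.sqrt_sq hd0.le] at h2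
      calc Real.sqrt d * (δ/2) ≤ d * (δ/2) := by nlinarith
      _ = Real.sqrt n / 200 := by rw [hδ]; field_simp; ring
      _ ≤ Real.sqrt n / 100 := by linarith [hs0]


lemma geom_lemma {d : ℕ} (c : ℝ) (hc : 1 ≤ c) (x p y : EuclideanSpace ℝ (Fin d))
    (hx1 : c ≤ ‖x‖) (hp : ‖x - p‖ ≤ Real.sqrt c / 100)
    (hy : y ∈ ball (p - ((Real.sqrt c / (2 * ‖p‖)) • p)) (Real.sqrt c / 8)) :
    ‖y - x‖ < Real.sqrt c ∧ ‖y‖ < ‖x‖ := by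
  set s := Real.sqrt c with hs
  have hs1 : 1 ≤ s := by
    rw [hs, show (1:ℝ) = Real.sqrt 1 by simp]
    exact Real.sqrt_le_sqrt hc
  have hs0 : 0 < s := lt_of_lt_of_le one_pos hs1
  have hsc : s ≤ c := by
    have h2 : s * s = c := Real.mul_self_sqrt (by linarith)
    nlinarith
  have hxp : ‖x‖ - ‖p‖ ≤ ‖x - p‖ := by
    have := norm_sub_norm_le x p
    linarith [le_abs_self (‖x‖ - ‖p‖)]
  have hpn : c - s/100 ≤ ‖p‖ := by linarith
  have hp0 : 0 < ‖p‖ := by nlinarith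
  have hpx : ‖p‖ ≤ ‖x‖ + s/100 := by
    have h1 : ‖p‖ - ‖x‖ ≤ ‖p - x‖ := by
      have := norm_sub_norm_le p x
      linarith [le_abs_self (‖p‖ - ‖x‖)]
    rw [norm_sub_rev] at h1
    linarith
  set t := s / (2 * ‖p‖) with ht
  have ht0 : 0 < t := by positivity
  have htp : t * ‖p‖ = s / 2 := by
    rw [ht]; field_simp
  have ht1 : t ≤ 1 := by
    rw [ht, div_le_one (by positivity)]
    nlinarith
  set z := p - t • p with hz
  have hzp : ‖z - p‖ = s / 2 := by
    rw [hz, show p - t • p - p = -(t • p) by abel, norm_neg, norm_smul,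
      Real.norm_eq_abs, abs_of_pos ht0, htp]
  have hznorm : ‖z‖ = ‖p‖ - s / 2 := by
    rw [hz, show p - t • p = (1 - t) • p by rw [sub_smul, one_smul], norm_smul,
      Real.norm_eq_abs, abs_of_nonneg (by linarith)]
    nlinarith [htp]
  rw [mem_ball, dist_eq_norm] at hy
  have hyz : ‖y - z‖ < s / 8 := hy
  constructor
  · calc ‖y - x‖ = ‖(y - z) + (z - p) + (p - x)‖ := by abel_nf
    _ ≤ ‖(y - z) + (z - p)‖ + ‖p - x‖ := norm_add_le _ _
    _ ≤ ‖y - z‖ + ‖z - p‖ + ‖p - x‖ := by linarith [norm_add_le (y - z) (z - p)]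
    _ < s := by
        rw [norm_sub_rev p x] at *
        rw [hzp]
        linarith
  · calc ‖y‖ = ‖(y - z) + z‖ := by rw [sub_add_cancel]
    _ ≤ ‖y - z‖ + ‖z‖ := norm_add_le _ _
    _ < ‖x‖ := by rw [hznorm]; linarith

set_option maxHeartbeats 1000000 in
/-- Almost surely, only finitely many points `x` of the Poisson process satisfy
`‖Ψ(x) - x‖ > ‖x‖^(1/2)`, where `Ψ(x)` is the nearest point of `N ∪ {0}` to `x` among
points strictly closer to the origin. -/
theorem finitely_many_long_edges {Ω : Type*} [MeasureSpace Ω]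
    [IsProbabilityMeasure (ℙ : Measure Ω)]
    {d : ℕ} (hd : 2 ≤ d)
    (N : Ω → Set (EuclideanSpace ℝ (Fin d))) (hN : IsHomPoissonPP N)
    (Ψ : Ω → EuclideanSpace ℝ (Fin d) → EuclideanSpace ℝ (Fin d))
    (hΨ : ∀ᵐ ω ∂ℙ, ∀ x ∈ N ω,
      Ψ ω x ∈ N ω ∪ {0} ∧ ‖Ψ ω x‖ < ‖x‖ ∧
        ∀ y ∈ N ω ∪ {0}, ‖y‖ < ‖x‖ → ‖Ψ ω x - x‖ ≤ ‖y - x‖) :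
    ∀ᵐ ω ∂ℙ, {x ∈ N ω | ‖x‖ ^ ((1 : ℝ) / 2) < ‖Ψ ω x - x‖}.Finite := by
  classical
  have hd1 : 1 ≤ d := le_trans one_le_two hd
  haveI : Nonempty (Fin d) := ⟨⟨0, by omega⟩⟩
  haveI : Nontrivial (EuclideanSpace ℝ (Fin d)) := by infer_instance
  -- volume constant
  have hball_fin : volume (ball (0:EuclideanSpace ℝ (Fin d)) 1) < ⊤ := measure_ball_lt_top
  set κ := (volume (ball (0:EuclideanSpace ℝ (Fin d)) 1)).toReal with hκdef
  have hκ : 0 < κ :=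
    ENNReal.toReal_pos (measure_ball_pos volume _ one_pos).ne' hball_fin.ne
  have hvol : ∀ (z : EuclideanSpace ℝ (Fin d)) (r : ℝ), 0 ≤ r →
      (volume (ball z r)).toReal = r ^ d * κ := by
    intro z r hr
    rw [Measure.addHaar_ball volume z hr, ENNReal.toReal_mul,
      ENNReal.toReal_ofReal (by positivity), finrank_euclideanSpace_fin]
  -- empty ball probability
  have hprob : ∀ (z : EuclideanSpace ℝ (Fin d)) (r : ℝ), 0 ≤ r →
      ℙ {ω | N ω ∩ ball z r = ∅} ≤ ENNReal.ofReal (Real.exp (-(r ^ d * κ))) := by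
    intro z r hr
    have h := hN.2 (ball z r) measurableSet_ball measure_ball_lt_top 0
    have hsub : {ω | N ω ∩ ball z r = ∅} ⊆ {ω | (N ω ∩ ball z r).ncard = 0} := by
      intro ω hω
      simp only [Set.mem_setOf_eq] at *
      rw [hω]; simp
    calc ℙ {ω | N ω ∩ ball z r = ∅} ≤ ℙ {ω | (N ω ∩ ball z r).ncard = 0} :=
          measure_mono hsub
    _ = ENNReal.ofReal (Real.exp (-(volume (ball z r)).toReal)) := by rw [h]; norm_num
    _ = ENNReal.ofReal (Real.exp (-(r ^ d * κ))) := by rw [hvol z r hr]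
  -- a.s. finiteness in balls
  have hinf : ∀ n : ℕ,
      ℙ {ω | (N ω ∩ ball (0:EuclideanSpace ℝ (Fin d)) (n:ℝ)).Infinite} = 0 := by
    intro n
    refine le_antisymm ?_ zero_le
    have hle : ∀ m : ℕ, n ≤ m → 1 ≤ m →
        ℙ {ω | (N ω ∩ ball (0:EuclideanSpace ℝ (Fin d)) (n:ℝ)).Infinite}
          ≤ ENNReal.ofReal (Real.exp (-κ) ^ m) := by
      intro m hnm h1m
      have hsub : {ω | (N ω ∩ ball (0:EuclideanSpace ℝ (Fin d)) (n:ℝ)).Infinite}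
          ⊆ {ω | (N ω ∩ ball (0:EuclideanSpace ℝ (Fin d)) (m:ℝ)).ncard = 0} := by
        intro ω hω
        simp only [Set.mem_setOf_eq] at *
        exact Set.Infinite.ncard (hω.mono
          (Set.inter_subset_inter_right _ (ball_subset_ball (by exact_mod_cast hnm))))
      have h := hN.2 (ball (0:EuclideanSpace ℝ (Fin d)) (m:ℝ)) measurableSet_ball
        measure_ball_lt_top 0
      calc ℙ {ω | (N ω ∩ ball (0:EuclideanSpace ℝ (Fin d)) (n:ℝ)).Infinite}
          ≤ ℙ {ω | (N ω ∩ ball (0:EuclideanSpace ℝ (Fin d)) (m:ℝ)).ncard = 0} :=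
            measure_mono hsub
      _ = ENNReal.ofReal (Real.exp
            (-(volume (ball (0:EuclideanSpace ℝ (Fin d)) (m:ℝ))).toReal)) := by
            rw [h]; norm_num
      _ ≤ ENNReal.ofReal (Real.exp (-κ) ^ m) := by
            apply ENNReal.ofReal_le_ofReal
            rw [hvol _ _ (by positivity), ← Real.exp_nat_mul]
            apply Real.exp_le_exp.2
            have hm1 : (1:ℝ) ≤ (m:ℝ) := by exact_mod_cast h1m
            have h1 : (m:ℝ) ≤ (m:ℝ)^d := le_self_pow₀ hm1 (by omega)
            nlinarith
    have htend : Tendsto (fun m : ℕ => ENNReal.ofReal (Real.exp (-κ) ^ m)) atTop (nhds 0) := by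
      have h1 : Tendsto (fun m : ℕ => Real.exp (-κ) ^ m) atTop (nhds 0) :=
        tendsto_pow_atTop_nhds_zero_of_lt_one (Real.exp_pos _).le
          (Real.exp_lt_one_iff.mpr (by linarith))
      have := ENNReal.tendsto_ofReal h1
      simpa using this
    exact ge_of_tendsto htend (Filter.eventually_atTop.2
      ⟨max n 1, fun m hm => hle m (le_trans (le_max_left _ _) hm)
        (le_trans (le_max_right _ _) hm)⟩)
  -- nets
  choose S hScard hSnet using fun n : ℕ => net_lemma hd1 (n+1) (by omega)
  -- the centers
  set zc : ℕ → EuclideanSpace ℝ (Fin d) → EuclideanSpace ℝ (Fin d) :=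
    fun n p => p - ((Real.sqrt ((n:ℝ)+1) / (2 * ‖p‖)) • p) with hzc
  set F : ℕ → Set Ω := fun n =>
    ⋃ p ∈ S n, {ω | N ω ∩ ball (zc n p) (Real.sqrt ((n:ℝ)+1) / 8) = ∅} with hF
  -- summability
  have hsum : (∑' n, ℙ (F n)) ≠ ⊤ := by
    set r := Real.exp (-(κ / 8^d)) with hrdef
    have hr0 : 0 < r := Real.exp_pos _
    have hr1 : r < 1 := by
      rw [hrdef]
      apply Real.exp_lt_one_iff.mpr
      have h8 : (0:ℝ) < (8:ℝ)^d := by positivity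
      have : 0 < κ / 8^d := div_pos hκ h8
      linarith
    have hb : ∀ n : ℕ, ℙ (F n) ≤
        ENNReal.ofReal ((((500*d)^d : ℕ) : ℝ) * ((n:ℝ)+1)^d * r^(n+1)) := by
      intro n
      have hn1 : (0:ℝ) ≤ (n:ℝ) := Nat.cast_nonneg n
      have hs1 : (1:ℝ) ≤ Real.sqrt ((n:ℝ)+1) := by
        nlinarith [Real.sq_sqrt (show (0:ℝ) ≤ (n:ℝ)+1 by linarith),
          Real.sqrt_nonneg ((n:ℝ)+1)]
      have hexp : Real.exp (-((Real.sqrt ((n:ℝ)+1)/8)^d * κ)) ≤ r^(n+1) := by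
        rw [hrdef, ← Real.exp_nat_mul]
        apply Real.exp_le_exp.2
        have h1 : ((n:ℝ)+1) ≤ (Real.sqrt ((n:ℝ)+1))^d := by
          have h2 : (Real.sqrt ((n:ℝ)+1))^2 ≤ (Real.sqrt ((n:ℝ)+1))^d :=
            pow_le_pow_right₀ hs1 hd
          rwa [Real.sq_sqrt (by linarith)] at h2
        have key : ((n:ℝ)+1) * (κ/8^d) ≤ (Real.sqrt ((n:ℝ)+1))^d/8^d * κ := by
          rw [show ((n:ℝ)+1) * (κ/8^d) = (((n:ℝ)+1) * κ)/8^d by ring,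
              show (Real.sqrt ((n:ℝ)+1))^d/8^d * κ
                = ((Real.sqrt ((n:ℝ)+1))^d * κ)/8^d by ring]
          gcongr
        push_cast
        rw [div_pow]
        nlinarith [key]
      calc ℙ (F n)
          ≤ ∑ p ∈ S n, ℙ {ω | N ω ∩ ball (zc n p) (Real.sqrt ((n:ℝ)+1)/8) = ∅} := by
            simp only [hF]
            exact measure_biUnion_finset_le _ _
      _ ≤ ∑ q ∈ S n, ENNReal.ofReal (r^(n+1)) := by
            apply Finset.sum_le_sum
            intro p _
            exact le_trans (hprob _ _ (by positivity)) (ENNReal.ofReal_le_ofReal hexp)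
      _ = (S n).card * ENNReal.ofReal (r^(n+1)) := by rw [Finset.sum_const, nsmul_eq_mul]
      _ ≤ ENNReal.ofReal ((((500*d)^d : ℕ) : ℝ) * ((n:ℝ)+1)^d * r^(n+1)) := by
            rw [show ((S n).card : ℝ≥0∞) = ENNReal.ofReal ((S n).card : ℝ) by
                  rw [ENNReal.ofReal_natCast],
              ← ENNReal.ofReal_mul (by positivity)]
            apply ENNReal.ofReal_le_ofReal
            have hcard : ((S n).card : ℝ) ≤ (((500*d*(n+1))^d : ℕ) : ℝ) := by
              exact_mod_cast hScard n
            have hc2' : (500*d*(n+1))^d = (500*d)^d * (n+1)^d := by rw [mul_pow]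
            have hc2 : (((500*d*(n+1))^d : ℕ) : ℝ)
                = (((500*d)^d : ℕ) : ℝ) * ((n:ℝ)+1)^d := by rw [hc2']; push_cast; ring
            rw [hc2] at hcard
            nlinarith [pow_nonneg hr0.le (n+1), pow_pos hr0 (n+1)]
    have hsummable : Summable
        (fun n : ℕ => (((500*d)^d : ℕ) : ℝ) * ((n:ℝ)+1)^d * r^(n+1)) := by
      have h1 : Summable (fun n : ℕ => ((n:ℝ))^d * r^n) :=
        summable_pow_mul_geometric_of_norm_lt_one d
          (by rw [Real.norm_eq_abs, abs_of_pos hr0]; exact hr1)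
      have h2 : Summable (fun n : ℕ => (((n+1:ℕ)):ℝ)^d * r^(n+1)) := by
        exact_mod_cast (summable_nat_add_iff 1).2 h1
      have h3 : Summable (fun n : ℕ => ((n:ℝ)+1)^d * r^(n+1)) := by
        convert h2 using 2 with n
        push_cast
        ring
      simpa [mul_assoc] using h3.mul_left ((((500*d)^d : ℕ) : ℝ))
    have hfin2 : (∑' n, ℙ (F n)) ≤
        ENNReal.ofReal (∑' n : ℕ, (((500*d)^d : ℕ) : ℝ) * ((n:ℝ)+1)^d * r^(n+1)) := by
      rw [ENNReal.ofReal_tsum_of_nonneg (fun n => by positivity) hsummable]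
      exact ENNReal.tsum_le_tsum hb
    exact ne_top_of_le_ne_top ENNReal.ofReal_ne_top hfin2
  have hBC := MeasureTheory.ae_eventually_notMem hsum
  have hfin : ∀ᵐ ω ∂ℙ, ∀ n : ℕ,
      ¬ (N ω ∩ ball (0:EuclideanSpace ℝ (Fin d)) (n:ℝ)).Infinite := by
    rw [MeasureTheory.ae_all_iff]
    intro n
    rw [ae_iff]
    simpa using hinf n
  filter_upwards [hΨ, hBC, hfin] with ω hψ hev hfinω
  obtain ⟨n₀, hn₀⟩ := Filter.eventually_atTop.1 hev
  have hF2 : (N ω ∩ ball (0:EuclideanSpace ℝ (Fin d)) ((n₀+2 : ℕ):ℝ)).Finite :=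
    Set.not_infinite.1 (hfinω (n₀+2))
  apply hF2.subset
  rintro x ⟨hxN, hxlong⟩
  refine ⟨hxN, ?_⟩
  rw [mem_ball, dist_zero_right]
  by_contra hcon
  push_neg at hcon
  -- x is far away: derive contradiction
  set m := ⌊‖x‖⌋₊ with hm
  have hm2 : n₀ + 2 ≤ m := Nat.le_floor hcon
  have hm1 : (m:ℝ) ≤ ‖x‖ := Nat.floor_le (norm_nonneg x)
  have hm3 : ‖x‖ < (m:ℝ) + 1 := Nat.lt_floor_add_one _
  set n := m - 1 with hn
  have hnm : ((n:ℝ) + 1) = (m:ℝ) := by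
    have : n + 1 = m := by omega
    rw [← this]; push_cast; ring
  obtain ⟨p, hpS, hpx⟩ := hSnet n x (by push_cast; rw [hnm]; linarith)
  have hc1 : (1:ℝ) ≤ (n:ℝ) + 1 := by have : (0:ℝ) ≤ (n:ℝ) := Nat.cast_nonneg n; linarith
  have hgeom := fun y hy => geom_lemma ((n:ℝ)+1) hc1 x p y (by rw [hnm]; exact hm1)
    (by push_cast at hpx ⊢; exact hpx) hy
  have hempty : N ω ∩ ball (zc n p) (Real.sqrt ((n:ℝ)+1) / 8) = ∅ := by
    by_contra hne
    obtain ⟨y, hyN, hyB⟩ := Set.nonempty_iff_ne_empty.2 hne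
    obtain ⟨hyx, hyx2⟩ := hgeom y hyB
    have hmin := (hψ x hxN).2.2 y (Or.inl hyN) hyx2
    have hsq : Real.sqrt ((n:ℝ)+1) ≤ ‖x‖ ^ ((1:ℝ)/2) := by
      rw [← Real.sqrt_eq_rpow]
      exact Real.sqrt_le_sqrt (by rw [hnm]; exact hm1)
    linarith
  have hωF : ω ∈ F n := by
    rw [hF]
    exact Set.mem_biUnion hpS hempty
  exact hn₀ n (by omega) hωF
end

section
/- Let R > 0, ℓ ∈ (0, 1/2], c₊ := −R(1 − 4ℓ²)e_d, and let c_i ∈ ℝ^d with R + c_i·e_d ≤ 2Rℓ² and ρ_i ≥ 0 with ‖c_i + Re_d‖ ≥ ρ_i. Then ‖c_i − c₊‖ ≥ ρ_i, i.e., c₊ ∉ B(c_i, ρ_i). -/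
open Metric

/-- Step 4 computation of Proposition 3.2: with `c₊ = -R(1 - 4ℓ²)e_d`, if
`R + c_i·e_d ≤ 2Rℓ²` and `‖c_i + Re_d‖ ≥ ρ_i ≥ 0`, then `‖c_i - c₊‖ ≥ ρ_i`,
i.e. `c₊ ∉ B(c_i, ρ_i)`. -/
theorem cplus_not_in_ball {d : ℕ} (R ℓ : ℝ) (hR : 0 < R)
    (hℓ0 : 0 < ℓ) (hℓ1 : ℓ ≤ 1 / 2)
    (ci : EuclideanSpace ℝ (Fin (d + 1))) (ρi : ℝ) (hρi : 0 ≤ ρi)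
    (hci : R + (inner ℝ ci (ed d) : ℝ) ≤ 2 * R * ℓ ^ 2)
    (hρi' : ρi ≤ ‖ci + R • ed d‖) :
    ρi ≤ ‖ci - (-(R * (1 - 4 * ℓ ^ 2))) • ed d‖ ∧
      (-(R * (1 - 4 * ℓ ^ 2))) • ed d ∉ ball ci ρi := by
  set a : ℝ := R * (1 - 4 * ℓ ^ 2) with ha
  have hsub : ci - (-a) • ed d = ci + a • ed d := by
    rw [neg_smul, sub_neg_eq_add]
  have hed : ‖ed d‖ = 1 := by
    simp [ed, EuclideanSpace.norm_single]
  set t : ℝ := inner ℝ ci (ed d) with ht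
  have hsq : ∀ r : ℝ, ‖ci + r • ed d‖ ^ 2 = ‖ci‖ ^ 2 + 2 * (r * t) + r ^ 2 := by
    intro r
    rw [norm_add_sq_real, real_inner_smul_right, norm_smul, ← ht]
    simp [hed, mul_pow, sq_abs]
  have key : ‖ci + R • ed d‖ ≤ ‖ci + a • ed d‖ := by
    have h2 : ‖ci + R • ed d‖ ^ 2 ≤ ‖ci + a • ed d‖ ^ 2 := by
      rw [hsq, hsq, ha]
      nlinarith [mul_nonneg (by positivity : (0:ℝ) ≤ 4 * R * ℓ ^ 2)
        (by linarith : 0 ≤ 2 * R * ℓ ^ 2 - R - t)]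
    exact (pow_le_pow_iff_left₀ (norm_nonneg _) (norm_nonneg _) two_ne_zero).mp h2
  refine ⟨hsub ▸ (hρi'.trans key), ?_⟩
  intro hmem
  rw [mem_ball, dist_eq_norm, ← norm_neg, neg_sub, hsub] at hmem
  linarith [hρi'.trans key]
end
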